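/- arXiv:2208.11593 — 5 statements merged into one kernel-verified Lean document; each statement's English description precedes it below -/
import Mathlib

section
/- Let 0 < a_T < b_T and 0 < c_T, and define Ω_T = { (x,y) ∈ ℝ²×ℝ : a_T < |x₁x₂|·y ≤ b_T, max(|x₁|,|x₂|) ≤ c_T, 1 ≤ y ≤ T } and, for n ∈ ℕ₀², Δ_{T,n} as the set of (x,y) with a_T < |x₁x₂|·y ≤ b_T, c_T e⁻¹ < |x_i| ≤ c_T for i = 1,2, and e^{−(n₁+n₂)} ≤ y ≤ T·e^{−(n₁+n₂)}. Let a(n) be the diagonal matrix diag(e^{n₁}, e^{n₂}, e^{−n₁−n₂}) acting on ℝ³ = ℝ²×ℝ. Then Ω_T is the disjoint union over all n ∈ ℕ₀² of the sets a(n)⁻¹Δ_{T,n}. -/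
open Real

-- band membership characterization
lemma key_band (c x : ℝ) (hc : 0 < c) (hx : 0 < x) (n : ℕ) :
    (c * Real.exp (-((n:ℝ)+1)) < x ∧ x ≤ c * Real.exp (-(n:ℝ))) ↔
    ((n:ℝ) ≤ Real.log (c/x) ∧ Real.log (c/x) < (n:ℝ)+1) := by
  have hcx : 0 < c / x := div_pos hc hx
  rw [Real.le_log_iff_exp_le hcx, Real.log_lt_iff_lt_exp hcx, le_div_iff₀ hx, div_lt_iff₀ hx]
  constructor
  · rintro ⟨h1, h2⟩
    constructor
    · calc Real.exp (n:ℝ) * x ≤ Real.exp (n:ℝ) * (c * Real.exp (-(n:ℝ))) := by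
            exact mul_le_mul_of_nonneg_left h2 (Real.exp_pos _).le
        _ = c := by rw [mul_comm c, ← mul_assoc, ← Real.exp_add]; simp
    · calc c = Real.exp ((n:ℝ)+1) * (c * Real.exp (-((n:ℝ)+1))) := by
            rw [mul_comm c, ← mul_assoc, ← Real.exp_add,
              show (n:ℝ)+1 + -((n:ℝ)+1) = 0 by ring, Real.exp_zero, one_mul]
        _ < Real.exp ((n:ℝ)+1) * x := by
            exact mul_lt_mul_of_pos_left h1 (Real.exp_pos _)
  · rintro ⟨h1, h2⟩
    constructor
    · have := mul_lt_mul_of_pos_left h2 (Real.exp_pos (-((n:ℝ)+1)))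
      calc c * Real.exp (-((n:ℝ)+1)) = Real.exp (-((n:ℝ)+1)) * c := mul_comm _ _
        _ < Real.exp (-((n:ℝ)+1)) * (Real.exp ((n:ℝ)+1) * x) := this
        _ = x := by rw [← mul_assoc, ← Real.exp_add,
              show -((n:ℝ)+1) + ((n:ℝ)+1) = 0 by ring, Real.exp_zero, one_mul]
    · have := mul_le_mul_of_nonneg_left h1 (Real.exp_pos (-(n:ℝ))).le
      calc x = Real.exp (-(n:ℝ)) * (Real.exp (n:ℝ) * x) := by
            rw [← mul_assoc, ← Real.exp_add]; simp
        _ ≤ Real.exp (-(n:ℝ)) * c := this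
        _ = c * Real.exp (-(n:ℝ)) := mul_comm _ _

lemma key_floor (c x : ℝ) (hc : 0 < c) (hx : 0 < x) (n : ℕ) :
    (c * Real.exp (-((n:ℝ)+1)) < x ∧ x ≤ c * Real.exp (-(n:ℝ))) ↔
    (x ≤ c ∧ ⌊Real.log (c/x)⌋₊ = n) := by
  rw [key_band c x hc hx n]
  constructor
  · rintro ⟨h1, h2⟩
    have hL : (0:ℝ) ≤ Real.log (c/x) := le_trans (by positivity) h1
    refine ⟨?_, ?_⟩
    · by_contra h
      push_neg at h
      have : Real.log (c/x) < 0 := by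
        rw [Real.log_neg_iff (div_pos hc hx)]
        rw [div_lt_one hx]; exact h
      linarith
    · exact (Nat.floor_eq_iff hL).mpr ⟨h1, by push_cast; linarith⟩
  · rintro ⟨hxc, hfl⟩
    have hL : (0:ℝ) ≤ Real.log (c/x) := by
      apply Real.log_nonneg
      rw [le_div_iff₀ hx]; linarith
    subst hfl
    exact ⟨Nat.floor_le hL, by push_cast; exact Nat.lt_floor_add_one _⟩

lemma scale_le (k u v : ℝ) (hv : 0 ≤ v) :
    Real.exp k * u ≤ v ↔ u ≤ v * Real.exp (-k) := by
  constructor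
  · intro h
    calc u = Real.exp (-k) * (Real.exp k * u) := by
          rw [← mul_assoc, ← Real.exp_add, show -k + k = 0 by ring, Real.exp_zero, one_mul]
      _ ≤ Real.exp (-k) * v := mul_le_mul_of_nonneg_left h (Real.exp_pos _).le
      _ = v * Real.exp (-k) := mul_comm _ _
  · intro h
    calc Real.exp k * u ≤ Real.exp k * (v * Real.exp (-k)) :=
          mul_le_mul_of_nonneg_left h (Real.exp_pos _).le
      _ = v := by rw [mul_comm v, ← mul_assoc, ← Real.exp_add,
          show k + -k = 0 by ring, Real.exp_zero, one_mul]

lemma scale_lt (k u v : ℝ) :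
    v < Real.exp k * u ↔ v * Real.exp (-k) < u := by
  constructor
  · intro h
    calc v * Real.exp (-k) = Real.exp (-k) * v := mul_comm _ _
      _ < Real.exp (-k) * (Real.exp k * u) := mul_lt_mul_of_pos_left h (Real.exp_pos _)
      _ = u := by rw [← mul_assoc, ← Real.exp_add, show -k + k = 0 by ring,
          Real.exp_zero, one_mul]
  · intro h
    calc v = Real.exp k * (v * Real.exp (-k)) := by
          rw [mul_comm v, ← mul_assoc, ← Real.exp_add, show k + -k = 0 by ring,
            Real.exp_zero, one_mul]
      _ < Real.exp k * u := mul_lt_mul_of_pos_left h (Real.exp_pos _)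

theorem omega_tessellation (T a b c : ℝ) (hT : 1 ≤ T) (ha : 0 < a) (hab : a < b) (hc : 0 < c)
    (Δ : ℕ × ℕ → Set (ℝ × ℝ × ℝ))
    (hΔ : ∀ n, Δ n = {p : ℝ × ℝ × ℝ |
        (a < |p.1 * p.2.1| * p.2.2 ∧ |p.1 * p.2.1| * p.2.2 ≤ b) ∧
        (c * Real.exp (-1) < |p.1| ∧ |p.1| ≤ c) ∧
        (c * Real.exp (-1) < |p.2.1| ∧ |p.2.1| ≤ c) ∧
        (Real.exp (-((n.1 : ℝ) + n.2)) ≤ p.2.2 ∧ p.2.2 ≤ T * Real.exp (-((n.1 : ℝ) + n.2)))})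
    (Ω : Set (ℝ × ℝ × ℝ))
    (hΩ : Ω = {p : ℝ × ℝ × ℝ |
        (a < |p.1 * p.2.1| * p.2.2 ∧ |p.1 * p.2.1| * p.2.2 ≤ b) ∧
        max |p.1| |p.2.1| ≤ c ∧ 1 ≤ p.2.2 ∧ p.2.2 ≤ T})
    (S : ℕ × ℕ → Set (ℝ × ℝ × ℝ))
    (hS : ∀ n, S n = {p : ℝ × ℝ × ℝ |
        (Real.exp (n.1 : ℝ) * p.1, Real.exp (n.2 : ℝ) * p.2.1,
          Real.exp (-((n.1 : ℝ) + n.2)) * p.2.2) ∈ Δ n}) :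
    (Ω = ⋃ n : ℕ × ℕ, S n) ∧ Pairwise (Function.onFun Disjoint S) := by
  -- characterization of membership in S n
  have hmem : ∀ (n : ℕ × ℕ) (p : ℝ × ℝ × ℝ), p ∈ S n ↔
      ((a < |p.1 * p.2.1| * p.2.2 ∧ |p.1 * p.2.1| * p.2.2 ≤ b) ∧
       (c * Real.exp (-((n.1:ℝ)+1)) < |p.1| ∧ |p.1| ≤ c * Real.exp (-(n.1:ℝ))) ∧
       (c * Real.exp (-((n.2:ℝ)+1)) < |p.2.1| ∧ |p.2.1| ≤ c * Real.exp (-(n.2:ℝ))) ∧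
       (1 ≤ p.2.2 ∧ p.2.2 ≤ T)) := by
    intro n p
    rw [hS, hΔ]
    simp only [Set.mem_setOf_eq]
    obtain ⟨x₁, x₂, y⟩ := p
    simp only
    have e1 : ∀ (k : ℝ) (x : ℝ), |Real.exp k * x| = Real.exp k * |x| := by
      intro k x; rw [abs_mul, abs_of_pos (Real.exp_pos k)]
    have hprod : |Real.exp (n.1:ℝ) * x₁ * (Real.exp (n.2:ℝ) * x₂)| *
        (Real.exp (-((n.1:ℝ) + n.2)) * y) = |x₁ * x₂| * y := by
      rw [abs_mul, e1, e1, abs_mul]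
      have h0 : Real.exp (n.1:ℝ) * Real.exp (n.2:ℝ) * Real.exp (-((n.1:ℝ) + n.2)) = 1 := by
        rw [← Real.exp_add, ← Real.exp_add, show (n.1:ℝ) + n.2 + -((n.1:ℝ) + n.2) = 0 by ring,
          Real.exp_zero]
      linear_combination (|x₁| * |x₂| * y) * h0
    rw [hprod]
    constructor
    · rintro ⟨h1, ⟨h2a, h2b⟩, ⟨h3a, h3b⟩, h4a, h4b⟩
      rw [e1] at h2a h2b h3a h3b
      refine ⟨h1, ⟨?_, ?_⟩, ⟨?_, ?_⟩, ?_, ?_⟩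
      · have := (scale_lt (n.1:ℝ) |x₁| (c * Real.exp (-1))).mp h2a
        calc c * Real.exp (-((n.1:ℝ)+1)) = c * Real.exp (-1) * Real.exp (-(n.1:ℝ)) := by
              rw [mul_assoc, ← Real.exp_add]; ring_nf
          _ < |x₁| := this
      · exact (scale_le (n.1:ℝ) |x₁| c hc.le).mp h2b
      · have := (scale_lt (n.2:ℝ) |x₂| (c * Real.exp (-1))).mp h3a
        calc c * Real.exp (-((n.2:ℝ)+1)) = c * Real.exp (-1) * Real.exp (-(n.2:ℝ)) := by
              rw [mul_assoc, ← Real.exp_add]; ring_nf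
          _ < |x₂| := this
      · exact (scale_le (n.2:ℝ) |x₂| c hc.le).mp h3b
      · have hep := Real.exp_pos (-((n.1:ℝ) + n.2))
        have := (le_mul_iff_one_le_right hep).mp h4a
        exact this
      · have hep := Real.exp_pos (-((n.1:ℝ) + n.2))
        rw [mul_comm T] at h4b
        exact le_of_mul_le_mul_left h4b hep
    · rintro ⟨h1, ⟨h2a, h2b⟩, ⟨h3a, h3b⟩, h4a, h4b⟩
      rw [e1, e1]
      have hep := Real.exp_pos (-((n.1:ℝ) + n.2))
      refine ⟨h1, ⟨?_, ?_⟩, ⟨?_, ?_⟩, ?_, ?_⟩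
      · rw [scale_lt]
        calc c * Real.exp (-1) * Real.exp (-(n.1:ℝ)) = c * Real.exp (-((n.1:ℝ)+1)) := by
              rw [mul_assoc, ← Real.exp_add]; ring_nf
          _ < |x₁| := h2a
      · rw [scale_le _ _ _ hc.le]; exact h2b
      · rw [scale_lt]
        calc c * Real.exp (-1) * Real.exp (-(n.2:ℝ)) = c * Real.exp (-((n.2:ℝ)+1)) := by
              rw [mul_assoc, ← Real.exp_add]; ring_nf
          _ < |x₂| := h3a
      · rw [scale_le _ _ _ hc.le]; exact h3b
      · exact (le_mul_iff_one_le_right hep).mpr h4a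
      · rw [mul_comm T]; exact mul_le_mul_of_nonneg_left h4b hep.le
  constructor
  · -- Ω = ⋃ S n
    rw [hΩ]
    ext p
    simp only [Set.mem_setOf_eq, Set.mem_iUnion]
    constructor
    · rintro ⟨⟨h1a, h1b⟩, hmax, hy1, hy2⟩
      have hy0 : 0 < p.2.2 := lt_of_lt_of_le one_pos hy1
      have habs : 0 < |p.1 * p.2.1| := by
        by_contra h
        push_neg at h
        have : |p.1 * p.2.1| = 0 := le_antisymm h (abs_nonneg _)
        rw [this, zero_mul] at h1a; linarith
      rw [abs_mul] at habs
      have h10 : 0 < |p.1| := by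
        rcases (mul_pos_iff.mp habs) with ⟨h, _⟩ | ⟨_, h⟩
        · exact h
        · exact absurd h (not_lt.mpr (abs_nonneg _))
      have h20 : 0 < |p.2.1| := by
        rcases (mul_pos_iff.mp habs) with ⟨_, h⟩ | ⟨h, _⟩
        · exact h
        · exact absurd h (not_lt.mpr (abs_nonneg _))
      have h1c : |p.1| ≤ c := le_trans (le_max_left _ _) hmax
      have h2c : |p.2.1| ≤ c := le_trans (le_max_right _ _) hmax
      refine ⟨(⌊Real.log (c / |p.1|)⌋₊, ⌊Real.log (c / |p.2.1|)⌋₊), ?_⟩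
      rw [hmem]
      exact ⟨⟨h1a, h1b⟩,
        (key_floor c |p.1| hc h10 _).mpr ⟨h1c, rfl⟩,
        (key_floor c |p.2.1| hc h20 _).mpr ⟨h2c, rfl⟩, hy1, hy2⟩
    · rintro ⟨n, hn⟩
      rw [hmem] at hn
      obtain ⟨h1, ⟨h2a, h2b⟩, ⟨h3a, h3b⟩, h4a, h4b⟩ := hn
      have h10 : 0 < |p.1| := lt_trans (mul_pos hc (Real.exp_pos _)) h2a
      have h20 : 0 < |p.2.1| := lt_trans (mul_pos hc (Real.exp_pos _)) h3a
      have h1c := ((key_floor c |p.1| hc h10 n.1).mp ⟨h2a, h2b⟩).1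
      have h2c := ((key_floor c |p.2.1| hc h20 n.2).mp ⟨h3a, h3b⟩).1
      exact ⟨h1, max_le h1c h2c, h4a, h4b⟩
  · -- pairwise disjoint
    intro n m hnm
    rw [Function.onFun, Set.disjoint_left]
    intro p hpn hpm
    rw [hmem] at hpn hpm
    obtain ⟨_, ⟨h2a, h2b⟩, ⟨h3a, h3b⟩, _, _⟩ := hpn
    obtain ⟨_, ⟨g2a, g2b⟩, ⟨g3a, g3b⟩, _, _⟩ := hpm
    have h10 : 0 < |p.1| := lt_trans (mul_pos hc (Real.exp_pos _)) h2a
    have h20 : 0 < |p.2.1| := lt_trans (mul_pos hc (Real.exp_pos _)) h3a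
    have e1 := ((key_floor c |p.1| hc h10 n.1).mp ⟨h2a, h2b⟩).2
    have e2 := ((key_floor c |p.2.1| hc h20 n.2).mp ⟨h3a, h3b⟩).2
    have f1 := ((key_floor c |p.1| hc h10 m.1).mp ⟨g2a, g2b⟩).2
    have f2 := ((key_floor c |p.2.1| hc h20 m.2).mp ⟨g3a, g3b⟩).2
    exact hnm (Prod.ext (e1 ▸ f1) (e2 ▸ f2))
end

section
/- Let 0 < ε < 1, r > 0, and t = (t₁,t₂) ∈ ℝ₊². Then the Lebesgue measure of the set of x ∈ [0,1)² for which the lattice a(t)Λ_{x,r} contains a nonzero vector of ℓ∞-norm at most ε is O(ε³/r), with an implicit constant independent of ε, r, t. -/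
open MeasureTheory

/-- The one-dimensional "bad" set for a fixed denominator `q`. -/
def badSet (q : ℤ) (δ : ℝ) : Set ℝ :=
  {y | y ∈ Set.Ico (0:ℝ) 1 ∧ ∃ p : ℤ, |(p : ℝ) + q * y| ≤ δ}

lemma badSet_volume (q : ℤ) (hq : q ≠ 0) (δ : ℝ) (hδ0 : 0 ≤ δ) (hδ1 : δ ≤ 1) :
    volume (badSet q δ) ≤ ENNReal.ofReal (10 * δ) := by
  have hm1 : (1:ℤ) ≤ |q| := Int.one_le_abs hq
  have hqR : (0:ℝ) < |(q:ℝ)| := abs_pos.mpr (by exact_mod_cast hq)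
  have hqR1 : (1:ℝ) ≤ |(q:ℝ)| := by exact_mod_cast hm1
  set T : Finset ℤ := Finset.Icc (-(|q|+1)) (|q|+1) with hT
  have hsub : badSet q δ ⊆ ⋃ p ∈ T, Metric.closedBall (-(p:ℝ)/q) (δ / |(q:ℝ)|) := by
    rintro y ⟨⟨hy0, hy1⟩, p, hp⟩
    have hqy : |(q:ℝ) * y| ≤ |(q:ℝ)| := by
      rw [abs_mul]
      calc |(q:ℝ)| * |y| ≤ |(q:ℝ)| * 1 := by
            apply mul_le_mul_of_nonneg_left _ (le_of_lt hqR)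
            rw [abs_of_nonneg hy0]; linarith
        _ = |(q:ℝ)| := mul_one _
    have hpbound : |(p:ℝ)| ≤ |(q:ℝ)| + 1 := by
      have : |(p:ℝ)| = |((p:ℝ) + q*y) + (-(q*y))| := by ring_nf
      rw [this]
      calc |((p:ℝ) + q*y) + (-(q*y))| ≤ |(p:ℝ) + q*y| + |(-(q*y))| := abs_add_le _ _
        _ ≤ δ + |(q:ℝ)*y| := by rw [abs_neg]; exact add_le_add hp le_rfl
        _ ≤ 1 + |(q:ℝ)| := add_le_add hδ1 hqy
        _ = |(q:ℝ)| + 1 := by ring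
    have hpZ : |p| ≤ |q| + 1 := by exact_mod_cast (by push_cast; exact hpbound : ((|p|:ℤ):ℝ) ≤ ((|q|+1:ℤ):ℝ))
    have hpT : p ∈ T := by
      rw [hT, Finset.mem_Icc]
      rw [abs_le] at hpZ
      exact ⟨hpZ.1, hpZ.2⟩
    refine Set.mem_biUnion hpT ?_
    rw [Metric.mem_closedBall, Real.dist_eq]
    have hq0 : (q:ℝ) ≠ 0 := by exact_mod_cast hq
    have key : |y - (-(p:ℝ)/q)| = |(p:ℝ) + q * y| / |(q:ℝ)| := by
      rw [eq_div_iff (ne_of_gt hqR), ← abs_mul]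
      congr 1
      field_simp
      ring
    rw [key]
    gcongr
  calc volume (badSet q δ)
      ≤ volume (⋃ p ∈ T, Metric.closedBall (-(p:ℝ)/q) (δ / |(q:ℝ)|)) := measure_mono hsub
    _ ≤ ∑ p ∈ T, volume (Metric.closedBall (-(p:ℝ)/q) (δ / |(q:ℝ)|)) :=
        measure_biUnion_finset_le _ _
    _ = ∑ p ∈ T, ENNReal.ofReal (2 * (δ / |(q:ℝ)|)) := by
        simp [Real.volume_closedBall]
    _ = T.card • ENNReal.ofReal (2 * (δ / |(q:ℝ)|)) := Finset.sum_const _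
    _ ≤ ENNReal.ofReal (10 * δ) := by
        have hcard : T.card = (2 * |q| + 3).toNat := by
          rw [hT, Int.card_Icc]; omega
        rw [nsmul_eq_mul, ← ENNReal.ofReal_natCast, ← ENNReal.ofReal_mul (by positivity)]
        apply ENNReal.ofReal_le_ofReal
        have hcZ : (T.card : ℤ) = 2 * |q| + 3 := by rw [hcard]; omega
        have hcR : (T.card : ℝ) = 2 * |(q:ℝ)| + 3 := by exact_mod_cast hcZ
        have hsplit : (2 * |(q:ℝ)| + 3) * (2 * (δ / |(q:ℝ)|)) =
            (4 * |(q:ℝ)| * δ + 6 * δ) / |(q:ℝ)| := by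
          field_simp; ring
        rw [hcR, hsplit, div_le_iff₀ hqR]
        nlinarith [mul_nonneg hδ0 (le_of_lt hqR)]

theorem s1_volume_bound : ∃ C : ℝ, 0 < C ∧ ∀ ε r t₁ t₂ : ℝ,
    0 < ε → ε < 1 → 0 < r → 0 ≤ t₁ → 0 ≤ t₂ →
    volume {x : ℝ × ℝ | x ∈ Set.Ico (0:ℝ) 1 ×ˢ Set.Ico (0:ℝ) 1 ∧
        ∃ p₁ p₂ q : ℤ, ¬(p₁ = 0 ∧ p₂ = 0 ∧ q = 0) ∧
          |(p₁ : ℝ) + q * x.1| ≤ ε * Real.exp (-t₁) ∧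
          |(p₂ : ℝ) + q * x.2| ≤ ε * Real.exp (-t₂) ∧
          r * |(q : ℝ)| ≤ ε * Real.exp (t₁ + t₂)}
      ≤ ENNReal.ofReal (C * ε ^ 3 / r) := by
  refine ⟨200, by norm_num, ?_⟩
  intro ε r t₁ t₂ hε0 hε1 hr ht₁ ht₂
  have hδ₁0 : 0 ≤ ε * Real.exp (-t₁) := by positivity
  have hδ₂0 : 0 ≤ ε * Real.exp (-t₂) := by positivity
  have he₁ : Real.exp (-t₁) ≤ 1 := Real.exp_le_one_iff.mpr (by linarith)
  have he₂ : Real.exp (-t₂) ≤ 1 := Real.exp_le_one_iff.mpr (by linarith)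
  have hδ₁1 : ε * Real.exp (-t₁) < 1 := by nlinarith [Real.exp_pos (-t₁)]
  have hδ₂1 : ε * Real.exp (-t₂) < 1 := by nlinarith [Real.exp_pos (-t₂)]
  set Q : ℝ := ε * Real.exp (t₁ + t₂) / r with hQdef
  have hQ0 : 0 ≤ Q := by positivity
  set N : ℤ := ⌊Q⌋ with hNdef
  have hN0 : 0 ≤ N := Int.floor_nonneg.mpr hQ0
  set T : Finset ℤ := Finset.Icc (-N) N \ {(0:ℤ)} with hT
  have hsub : {x : ℝ × ℝ | x ∈ Set.Ico (0:ℝ) 1 ×ˢ Set.Ico (0:ℝ) 1 ∧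
        ∃ p₁ p₂ q : ℤ, ¬(p₁ = 0 ∧ p₂ = 0 ∧ q = 0) ∧
          |(p₁ : ℝ) + q * x.1| ≤ ε * Real.exp (-t₁) ∧
          |(p₂ : ℝ) + q * x.2| ≤ ε * Real.exp (-t₂) ∧
          r * |(q : ℝ)| ≤ ε * Real.exp (t₁ + t₂)} ⊆
      ⋃ q ∈ T, (badSet q (ε * Real.exp (-t₁)) ×ˢ badSet q (ε * Real.exp (-t₂))) := by
    rintro x ⟨hx, p₁, p₂, q, hne, h1, h2, h3⟩
    obtain ⟨hx1, hx2⟩ := hx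
    have hq0 : q ≠ 0 := by
      rintro rfl
      simp only [Int.cast_zero, zero_mul, add_zero] at h1 h2
      have hp₁ : p₁ = 0 := by
        have h' : |(p₁:ℝ)| < 1 := lt_of_le_of_lt h1 hδ₁1
        have h2 : |p₁| < 1 := by exact_mod_cast (by push_cast; exact h' : ((|p₁|:ℤ):ℝ) < 1)
        have h3 := abs_nonneg p₁
        have : |p₁| = 0 := by omega
        exact abs_eq_zero.mp this
      have hp₂ : p₂ = 0 := by
        have h' : |(p₂:ℝ)| < 1 := lt_of_le_of_lt h2 hδ₂1
        have h2 : |p₂| < 1 := by exact_mod_cast (by push_cast; exact h' : ((|p₂|:ℤ):ℝ) < 1)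
        have h3 := abs_nonneg p₂
        have : |p₂| = 0 := by omega
        exact abs_eq_zero.mp this
      exact hne ⟨hp₁, hp₂, rfl⟩
    have hqQ : |(q:ℝ)| ≤ Q := by
      rw [hQdef, le_div_iff₀ hr]
      linarith [h3, mul_comm r |(q:ℝ)|]
    have hqN : |q| ≤ N := by
      rw [hNdef]
      apply Int.le_floor.mpr
      push_cast
      exact hqQ
    have hqT : q ∈ T := by
      rw [hT, Finset.mem_sdiff, Finset.mem_Icc, Finset.mem_singleton]
      rw [abs_le] at hqN
      exact ⟨⟨hqN.1, hqN.2⟩, hq0⟩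
    exact Set.mem_biUnion hqT ⟨⟨hx1, p₁, h1⟩, ⟨hx2, p₂, h2⟩⟩
  have hcard : (T.card : ℝ) ≤ 2 * Q := by
    have h0T : ({(0:ℤ)} : Finset ℤ) ⊆ Finset.Icc (-N) N := by
      intro a ha
      rw [Finset.mem_singleton] at ha
      rw [Finset.mem_Icc]
      omega
    have hc1 : T.card = (Finset.Icc (-N) N).card - 1 := by
      rw [hT, Finset.card_sdiff_of_subset h0T, Finset.card_singleton]
    have hc2 : T.card = (2*N).toNat := by
      rw [hc1, Int.card_Icc]; omega
    have hcZ : (T.card : ℤ) = 2 * N := by rw [hc2]; omega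
    have : (T.card : ℝ) = 2 * (N:ℝ) := by exact_mod_cast hcZ
    rw [this]
    have := Int.floor_le Q
    rw [← hNdef] at this
    linarith
  calc volume {x : ℝ × ℝ | x ∈ Set.Ico (0:ℝ) 1 ×ˢ Set.Ico (0:ℝ) 1 ∧
        ∃ p₁ p₂ q : ℤ, ¬(p₁ = 0 ∧ p₂ = 0 ∧ q = 0) ∧
          |(p₁ : ℝ) + q * x.1| ≤ ε * Real.exp (-t₁) ∧
          |(p₂ : ℝ) + q * x.2| ≤ ε * Real.exp (-t₂) ∧
          r * |(q : ℝ)| ≤ ε * Real.exp (t₁ + t₂)}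
      ≤ volume (⋃ q ∈ T, (badSet q (ε * Real.exp (-t₁)) ×ˢ badSet q (ε * Real.exp (-t₂)))) :=
        measure_mono hsub
    _ ≤ ∑ q ∈ T, volume (badSet q (ε * Real.exp (-t₁)) ×ˢ badSet q (ε * Real.exp (-t₂))) :=
        measure_biUnion_finset_le _ _
    _ ≤ ∑ q ∈ T, ENNReal.ofReal (10 * (ε * Real.exp (-t₁))) * ENNReal.ofReal (10 * (ε * Real.exp (-t₂))) := by
        apply Finset.sum_le_sum
        intro q hq
        have hq0 : q ≠ 0 := by
          rw [hT, Finset.mem_sdiff, Finset.mem_singleton] at hq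
          exact hq.2
        rw [Measure.volume_eq_prod, Measure.prod_prod]
        exact mul_le_mul' (badSet_volume q hq0 _ hδ₁0 (le_of_lt hδ₁1))
          (badSet_volume q hq0 _ hδ₂0 (le_of_lt hδ₂1))
    _ = T.card • (ENNReal.ofReal (10 * (ε * Real.exp (-t₁))) * ENNReal.ofReal (10 * (ε * Real.exp (-t₂)))) :=
        Finset.sum_const _
    _ ≤ ENNReal.ofReal (200 * ε ^ 3 / r) := by
        rw [nsmul_eq_mul, ← ENNReal.ofReal_natCast, ← ENNReal.ofReal_mul (by positivity),
          ← ENNReal.ofReal_mul (by positivity)]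
        apply ENNReal.ofReal_le_ofReal
        have hkey : 2 * Q * (10 * (ε * Real.exp (-t₁)) * (10 * (ε * Real.exp (-t₂)))) =
            200 * ε ^ 3 / r := by
          rw [hQdef]
          have hexp : Real.exp (t₁ + t₂) * (Real.exp (-t₁) * Real.exp (-t₂)) = 1 := by
            rw [← Real.exp_add, ← Real.exp_add, show t₁ + t₂ + (-t₁ + -t₂) = 0 from by ring,
              Real.exp_zero]
          calc 2 * (ε * Real.exp (t₁ + t₂) / r) *
                (10 * (ε * Real.exp (-t₁)) * (10 * (ε * Real.exp (-t₂))))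
              = (200 * ε ^ 3 / r) * (Real.exp (t₁ + t₂) * (Real.exp (-t₁) * Real.exp (-t₂))) := by
                ring
            _ = 200 * ε ^ 3 / r := by rw [hexp, mul_one]
        rw [← hkey]
        have hpos : 0 ≤ 10 * (ε * Real.exp (-t₁)) * (10 * (ε * Real.exp (-t₂))) := by positivity
        calc (T.card : ℝ) * (10 * (ε * Real.exp (-t₁)) * (10 * (ε * Real.exp (-t₂))))
            ≤ 2 * Q * (10 * (ε * Real.exp (-t₁)) * (10 * (ε * Real.exp (-t₂)))) := by
              exact mul_le_mul_of_nonneg_right hcard hpos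
          _ = _ := rfl
end

section
/- Let B₁, B₂ be bounded Borel sets in ℝ² and let q₁, q₂ be coprime positive integers. For a bounded Borel set B ⊂ ℝ², let N_B(x) = |(ℤ² + x) ∩ B|. Then ∫_{[0,1)²} N_{B₁}(q₁x)·N_{B₂}(q₂x) dx ≤ |ℤ² ∩ (q₂B₁ − q₁B₂)| · min(Vol₂(B₁)/q₁², Vol₂(B₂)/q₂²). -/
/-!
Expanding the product, `N_{B₁}(q₁x) N_{B₂}(q₂x)` counts pairs `(p, r)` of lattice points with
`p + q₁x ∈ B₁` and `r + q₂x ∈ B₂`, and for such a pair `k = q₂p - q₁r = q₂(p + q₁x) - q₁(r + q₂x)`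
lies in `ℤ² ∩ (q₂B₁ - q₁B₂)`. As `bq₁ + aq₂ = 1` for some integers `a, b`, the pairs with a given
`k` are exactly `(ak + q₁s, -bk + q₂s)` for `s ∈ ℤ²`. Forgetting the condition on `r`, their number
is at most `∑ₛ 1_{B₁}(ak + q₁(x + s))`, whose integral over the unit square is `Vol(B₁)/q₁²`
because the integer translates of the square tile the plane; symmetrically for `B₂`. Summing over
the finitely many `k` gives the bound.
-/

open MeasureTheory Set ENNReal

def latticeEmbedding : ℤ × ℤ →+ ℝ × ℝ := (Int.castAddHom ℝ).prodMap (Int.castAddHom ℝ)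

lemma latticeEmbedding_add_smul (p : ℤ × ℤ) (q : ℝ) (x : ℝ × ℝ) :
    latticeEmbedding p + q • x = ((p.1 : ℝ) + q * x.1, (p.2 : ℝ) + q * x.2) := rfl

lemma isometry_latticeEmbedding : Isometry latticeEmbedding :=
  (Isometry.of_dist_eq Int.dist_cast_real).prodMap (Isometry.of_dist_eq Int.dist_cast_real)

lemma finite_preimage_latticeEmbedding {s : Set (ℝ × ℝ)} (hs : Bornology.IsBounded s) :
    (latticeEmbedding ⁻¹' s).Finite :=
  (isometry_latticeEmbedding.antilipschitz.isBounded_preimage hs).isCompact_closure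
    |>.finite_of_discrete.subset subset_closure

/-- `N_B(y)`, counted in `ℝ≥0∞` so that it needs no finiteness. -/
noncomputable def latticeCount (B : Set (ℝ × ℝ)) (y : ℝ × ℝ) : ℝ≥0∞ :=
  ∑' p : ℤ × ℤ, B.indicator 1 (latticeEmbedding p + y)

lemma natCard_le_latticeCount (B : Set (ℝ × ℝ)) (y : ℝ × ℝ) :
    (Nat.card {p : ℤ × ℤ // latticeEmbedding p + y ∈ B} : ℝ≥0∞) ≤ latticeCount B y := by
  calc (Nat.card {p : ℤ × ℤ // latticeEmbedding p + y ∈ B} : ℝ≥0∞)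
      = ({p | latticeEmbedding p + y ∈ B}.ncard : ℝ≥0∞) := by rw [← Nat.card_coe_set_eq]; rfl
    _ ≤ {p | latticeEmbedding p + y ∈ B}.encard := by exact_mod_cast ncard_le_encard _
    _ = latticeCount B y := (tsum_set_one _).symm.trans (tsum_subtype _ 1)

def unitSquare : Set (ℝ × ℝ) := Ico 0 1 ×ˢ Ico 0 1

noncomputable def latticeFloor (y : ℝ × ℝ) : ℤ × ℤ := (⌊y.1⌋, ⌊y.2⌋)

lemma measurable_latticeFloor : Measurable latticeFloor :=
  (Int.measurable_floor.comp measurable_fst).prodMk (Int.measurable_floor.comp measurable_snd)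

lemma preimage_add_latticeFloor_fiber (s : ℤ × ℤ) :
    (· + latticeEmbedding s) ⁻¹' (latticeFloor ⁻¹' {s}) = unitSquare := by
  ext x
  simp [latticeFloor, latticeEmbedding, unitSquare, Prod.ext_iff, Int.floor_add_intCast,
    Int.floor_eq_zero_iff]

theorem lintegral_unitSquare_tsum_translate {f : ℝ × ℝ → ℝ≥0∞} (hf : Measurable f) :
    ∫⁻ x in unitSquare, ∑' s, f (x + latticeEmbedding s) = ∫⁻ y, f y := by
  rw [lintegral_tsum (f := fun s x => f (x + latticeEmbedding s)) fun s =>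
    (hf.comp (measurable_add_const _)).aemeasurable]
  calc ∑' s, ∫⁻ x in unitSquare, f (x + latticeEmbedding s)
      = ∑' s, ∫⁻ y in latticeFloor ⁻¹' {s}, f y := by
        refine tsum_congr fun s => ?_
        rw [← preimage_add_latticeFloor_fiber s]
        exact (measurePreserving_add_right volume _).setLIntegral_comp_preimage_emb
          (measurableEmbedding_addRight _) f _
    _ = ∫⁻ y, f y := by
        rw [← lintegral_iUnion (fun s => measurable_latticeFloor (measurableSet_singleton s))
          (pairwise_disjoint_fiber _), iUnion_eq_univ_iff.2 fun y => ⟨latticeFloor y, rfl⟩,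
          Measure.restrict_univ]

theorem lintegral_unitSquare_tsum_indicator {B : Set (ℝ × ℝ)} (hB : MeasurableSet B) {q : ℕ}
    (hq : q ≠ 0) (c : ℝ × ℝ) :
    ∫⁻ x in unitSquare, ∑' s, B.indicator 1 (c + (q : ℝ) • (x + latticeEmbedding s)) =
      volume B / (q : ℝ≥0∞) ^ 2 := by
  rw [lintegral_unitSquare_tsum_translate (f := fun y => B.indicator 1 (c + (q : ℝ) • y))
    ((measurable_one.indicator hB).comp (by fun_prop))]
  change ∫⁻ y, ((fun y => (q : ℝ) • y) ⁻¹' ((c + ·) ⁻¹' B)).indicator 1 y = _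
  rw [lintegral_indicator_one (hB.preimage (by fun_prop) |>.preimage (by fun_prop)),
    Measure.addHaar_preimage_smul volume (by positivity), measure_preimage_add,
    Module.finrank_prod, Module.finrank_self, abs_of_nonneg (by positivity),
    ENNReal.ofReal_inv_of_pos (by positivity), ENNReal.ofReal_pow (by positivity),
    ENNReal.ofReal_natCast, one_add_one_eq_two, ENNReal.div_eq_inv_mul]

section Bezout

variable {M : Type*} [AddCommGroup M] {q₁ q₂ : ℕ} {a b : ℤ}

def bezoutEquiv (h : b * q₁ + a * q₂ = 1) : M × M ≃ M × M where
  toFun z := (a • z.1 + q₁ • z.2, -b • z.1 + q₂ • z.2)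
  invFun w := (q₂ • w.1 - q₁ • w.2, b • w.1 + a • w.2)
  left_inv z := by
    ext
    · linear_combination (norm := module) h • z.1
    · linear_combination (norm := module) h • z.2
  right_inv w := by
    ext
    · linear_combination (norm := module) h • w.1
    · linear_combination (norm := module) h • w.2

lemma bezoutEquiv_apply (h : b * q₁ + a * q₂ = 1) (z : M × M) :
    bezoutEquiv h z = (a • z.1 + q₁ • z.2, -b • z.1 + q₂ • z.2) := rfl

lemma nsmul_fst_sub_nsmul_snd_bezoutEquiv (h : b * q₁ + a * q₂ = 1) (z : M × M) :
    q₂ • (bezoutEquiv h z).1 - q₁ • (bezoutEquiv h z).2 = z.1 :=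
  congrArg Prod.fst ((bezoutEquiv h).symm_apply_apply z)

end Bezout

def diffLatticePoints (B₁ B₂ : Set (ℝ × ℝ)) (q₁ q₂ : ℕ) : Set (ℤ × ℤ) :=
  {k | ∃ u ∈ B₁, ∃ v ∈ B₂, latticeEmbedding k = (q₂ : ℝ) • u - (q₁ : ℝ) • v}

lemma finite_diffLatticePoints {B₁ B₂ : Set (ℝ × ℝ)} (hB₁ : Bornology.IsBounded B₁)
    (hB₂ : Bornology.IsBounded B₂) (q₁ q₂ : ℕ) : (diffLatticePoints B₁ B₂ q₁ q₂).Finite :=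
  (finite_preimage_latticeEmbedding ((hB₁.smul₀ (q₂ : ℝ)).sub (hB₂.smul₀ (q₁ : ℝ)))).subset
    fun k ⟨_, hu, _, hv, hk⟩ => by
      rw [mem_preimage, hk]
      exact sub_mem_sub (smul_mem_smul_set hu) (smul_mem_smul_set hv)

lemma latticeEmbedding_add_nsmul_add_smul (k s : ℤ × ℤ) (q : ℕ) (x : ℝ × ℝ) :
    latticeEmbedding (k + q • s) + (q : ℝ) • x =
      latticeEmbedding k + (q : ℝ) • (x + latticeEmbedding s) := by
  rw [map_add, map_nsmul, ← Nat.cast_smul_eq_nsmul ℝ]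
  module

/-- The number of pairs `(p, r)` counted by `N_{B₁}(q₁x) N_{B₂}(q₂x)` with `q₂p - q₁r = k`. -/
noncomputable def fiberCount {q₁ q₂ : ℕ} {a b : ℤ} (h : b * q₁ + a * q₂ = 1)
    (B₁ B₂ : Set (ℝ × ℝ)) (k : ℤ × ℤ) (x : ℝ × ℝ) : ℝ≥0∞ :=
  ∑' s, B₁.indicator 1 (latticeEmbedding (bezoutEquiv h (k, s)).1 + (q₁ : ℝ) • x) *
    B₂.indicator 1 (latticeEmbedding (bezoutEquiv h (k, s)).2 + (q₂ : ℝ) • x)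

section Fiber

variable {q₁ q₂ : ℕ} {a b : ℤ} (h : b * q₁ + a * q₂ = 1) {B₁ B₂ : Set (ℝ × ℝ)}

lemma latticeCount_mul_latticeCount_eq_tsum_fiberCount (x : ℝ × ℝ) :
    latticeCount B₁ ((q₁ : ℝ) • x) * latticeCount B₂ ((q₂ : ℝ) • x) =
      ∑' k, fiberCount h B₁ B₂ k x := by
  rw [latticeCount, latticeCount, ← ENNReal.tsum_mul_right]
  simp_rw [← ENNReal.tsum_mul_left]
  rw [← ENNReal.tsum_prod, ← (bezoutEquiv h).tsum_eq, ENNReal.tsum_prod']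
  rfl

lemma fiberCount_eq_zero {k : ℤ × ℤ} (hk : k ∉ diffLatticePoints B₁ B₂ q₁ q₂) (x : ℝ × ℝ) :
    fiberCount h B₁ B₂ k x = 0 := by
  refine ENNReal.tsum_eq_zero.2 fun s => ?_
  by_contra hne
  obtain ⟨h₁, h₂⟩ := mul_ne_zero_iff.1 hne
  refine hk ⟨_, mem_of_indicator_ne_zero h₁, _, mem_of_indicator_ne_zero h₂, ?_⟩
  have hkps := congrArg latticeEmbedding (nsmul_fst_sub_nsmul_snd_bezoutEquiv h (k, s))
  rw [map_sub, map_nsmul, map_nsmul, ← Nat.cast_smul_eq_nsmul ℝ, ← Nat.cast_smul_eq_nsmul ℝ]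
    at hkps
  rw [← hkps]
  module

lemma fiberCount_le_fst (k : ℤ × ℤ) (x : ℝ × ℝ) :
    fiberCount h B₁ B₂ k x ≤
      ∑' s, B₁.indicator 1 (latticeEmbedding (a • k) + (q₁ : ℝ) • (x + latticeEmbedding s)) := by
  refine ENNReal.tsum_le_tsum fun s => ?_
  simp only [bezoutEquiv_apply, latticeEmbedding_add_nsmul_add_smul]
  refine mul_le_of_le_one_right' ?_
  exact indicator_le (fun _ _ => le_rfl) _

lemma fiberCount_le_snd (k : ℤ × ℤ) (x : ℝ × ℝ) :
    fiberCount h B₁ B₂ k x ≤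
      ∑' s, B₂.indicator 1 (latticeEmbedding (-b • k) + (q₂ : ℝ) • (x + latticeEmbedding s)) := by
  refine ENNReal.tsum_le_tsum fun s => ?_
  simp only [bezoutEquiv_apply, latticeEmbedding_add_nsmul_add_smul]
  refine mul_le_of_le_one_left' ?_
  exact indicator_le (fun _ _ => le_rfl) _

lemma measurable_fiberCount (hB₁ : MeasurableSet B₁) (hB₂ : MeasurableSet B₂) (k : ℤ × ℤ) :
    Measurable (fiberCount h B₁ B₂ k) :=
  Measurable.tsum fun _ => ((measurable_one.indicator hB₁).comp (by fun_prop)).mul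
    ((measurable_one.indicator hB₂).comp (by fun_prop))

lemma lintegral_fiberCount_le (hB₁ : MeasurableSet B₁) (hB₂ : MeasurableSet B₂) (hq₁ : q₁ ≠ 0)
    (hq₂ : q₂ ≠ 0) (k : ℤ × ℤ) :
    ∫⁻ x in unitSquare, fiberCount h B₁ B₂ k x ≤ (diffLatticePoints B₁ B₂ q₁ q₂).indicator
      (fun _ => min (volume B₁ / (q₁ : ℝ≥0∞) ^ 2) (volume B₂ / (q₂ : ℝ≥0∞) ^ 2)) k := by
  by_cases hk : k ∈ diffLatticePoints B₁ B₂ q₁ q₂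
  · rw [indicator_of_mem hk]
    refine le_min ?_ ?_
    · exact (lintegral_mono (fiberCount_le_fst h k)).trans_eq
        (lintegral_unitSquare_tsum_indicator hB₁ hq₁ _)
    · exact (lintegral_mono (fiberCount_le_snd h k)).trans_eq
        (lintegral_unitSquare_tsum_indicator hB₂ hq₂ _)
  · simp [indicator_of_notMem hk, fiberCount_eq_zero h hk]

end Fiber

theorem lintegral_latticeCount_mul_le {B₁ B₂ : Set (ℝ × ℝ)} (hB₁ : MeasurableSet B₁)
    (hB₂ : MeasurableSet B₂) {q₁ q₂ : ℕ} (hq₁ : q₁ ≠ 0) (hq₂ : q₂ ≠ 0) (hco : q₁.Coprime q₂) :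
    ∫⁻ x in unitSquare, latticeCount B₁ ((q₁ : ℝ) • x) * latticeCount B₂ ((q₂ : ℝ) • x) ≤
      (diffLatticePoints B₁ B₂ q₁ q₂).encard *
        min (volume B₁ / (q₁ : ℝ≥0∞) ^ 2) (volume B₂ / (q₂ : ℝ≥0∞) ^ 2) := by
  obtain ⟨b, a, h⟩ := Nat.isCoprime_iff_coprime.2 hco
  simp_rw [latticeCount_mul_latticeCount_eq_tsum_fiberCount h]
  rw [lintegral_tsum fun k => (measurable_fiberCount h hB₁ hB₂ k).aemeasurable]
  refine (ENNReal.tsum_le_tsum (lintegral_fiberCount_le h hB₁ hB₂ hq₁ hq₂)).trans_eq ?_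
  rw [← tsum_subtype, tsum_set_const]

theorem mean_count_boxes (B₁ B₂ : Set (ℝ × ℝ))
    (hB₁m : MeasurableSet B₁) (hB₂m : MeasurableSet B₂)
    (hB₁b : Bornology.IsBounded B₁) (hB₂b : Bornology.IsBounded B₂)
    (q₁ q₂ : ℕ) (hq₁ : 0 < q₁) (hq₂ : 0 < q₂) (hco : Nat.Coprime q₁ q₂) :
    (∫ x in Set.Ico (0:ℝ) 1 ×ˢ Set.Ico (0:ℝ) 1,
        (Nat.card {p : ℤ × ℤ // ((p.1 : ℝ) + q₁ * x.1, (p.2 : ℝ) + q₁ * x.2) ∈ B₁} : ℝ) *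
        (Nat.card {p : ℤ × ℤ // ((p.1 : ℝ) + q₂ * x.1, (p.2 : ℝ) + q₂ * x.2) ∈ B₂} : ℝ))
      ≤ (Nat.card {k : ℤ × ℤ //
            ∃ u ∈ B₁, ∃ v ∈ B₂, ((k.1 : ℝ), (k.2 : ℝ)) = (q₂ : ℝ) • u - (q₁ : ℝ) • v} : ℝ) *
          min ((volume B₁).toReal / q₁ ^ 2) ((volume B₂).toReal / q₂ ^ 2) := by
  have hS := finite_diffLatticePoints hB₁b hB₂b q₁ q₂
  have hm₁ : volume B₁ / (q₁ : ℝ≥0∞) ^ 2 ≠ ∞ :=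
    ENNReal.div_ne_top hB₁b.measure_lt_top.ne (by positivity)
  have hm₂ : volume B₂ / (q₂ : ℝ≥0∞) ^ 2 ≠ ∞ :=
    ENNReal.div_ne_top hB₂b.measure_lt_top.ne (by positivity)
  have hfin : (diffLatticePoints B₁ B₂ q₁ q₂).encard *
      min (volume B₁ / (q₁ : ℝ≥0∞) ^ 2) (volume B₂ / (q₂ : ℝ≥0∞) ^ 2) ≠ ∞ :=
    mul_ne_top (by simpa using hS.encard_lt_top.ne) ((min_le_left _ _).trans_lt hm₁.lt_top).ne
  -- `norm_integral_le_lintegral_norm` needs no integrability, so the measurability of the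
  -- counting functions never has to be checked.
  refine (Real.le_norm_self _).trans <| (norm_integral_le_lintegral_norm _).trans ?_
  calc _ ≤ ((diffLatticePoints B₁ B₂ q₁ q₂).encard *
        min (volume B₁ / (q₁ : ℝ≥0∞) ^ 2) (volume B₂ / (q₂ : ℝ≥0∞) ^ 2)).toReal := by
        refine ENNReal.toReal_mono hfin <| (lintegral_mono fun x => ?_).trans
          (lintegral_latticeCount_mul_le hB₁m hB₂m hq₁.ne' hq₂.ne' hco)
        rw [Real.norm_of_nonneg (by positivity), ENNReal.ofReal_mul (by positivity),
          ENNReal.ofReal_natCast, ENNReal.ofReal_natCast]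
        simp only [← latticeEmbedding_add_smul]
        exact mul_le_mul' (natCard_le_latticeCount _ _) (natCard_le_latticeCount _ _)
    _ = _ := by
        rw [ENNReal.toReal_mul, ENNReal.toReal_min hm₁ hm₂, ← hS.cast_ncard_eq,
          ← Nat.card_coe_set_eq]
        simp only [ENat.toENNReal_coe, ENNReal.toReal_natCast, ENNReal.toReal_div,
          ENNReal.toReal_pow]
        rfl
end

section
/- Fix coprime positive integers q₁, q₂, bounded Borel sets B₁, B₂ ⊂ ℝ², and k ∈ ℤ². Then the sum over (p₁,p₂) ∈ ℤ²×ℤ² with q₂p₁ − q₁p₂ = k of ∫_{[0,1)²} χ_{B₁}(p₁ + q₁x)·χ_{B₂}(p₂ + q₂x) dx equals (q₁q₂)⁻² · Vol₂((q₂B₁ − k) ∩ q₁B₂). -/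
/-!
Since `q₁, q₂` are coprime, a Bézout identity `u q₁ + v q₂ = 1` parametrizes the solutions of
`q₂ p₁ - q₁ p₂ = k` by `t ∈ ℤ²`. For a solution,
`q₂ (p₁ + q₁ x) - k = q₁ (p₂ + q₂ x) = q₁ p₂ + q₁ q₂ x`, so the integrand is the indicator of
`S = (q₂ B₁ - k) ∩ q₁ B₂` at `q₁ p₂ + q₁ q₂ x`, and the integral is
`(q₁ q₂)⁻² Vol₂ (S ∩ (q₁ p₂ + [0, q₁ q₂)²))`. As `t` runs over `ℤ²` these squares tile the plane,
so the volumes add up to `Vol₂ S`.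
-/

open MeasureTheory Set Function

def bezoutSolutionEquiv {M : Type*} [AddCommGroup M] {a b u v : ℤ} (h : u * a + v * b = 1) (k : M) :
    M ≃ {p : M × M // b • p.1 - a • p.2 = k} where
  toFun t := ⟨(v • k + a • t, -(u • k) + b • t), by linear_combination (norm := module) h • k⟩
  invFun p := u • p.1.1 + v • p.1.2
  left_inv t := by linear_combination (norm := module) h • t
  right_inv := by
    rintro ⟨⟨x, y⟩, hp⟩
    ext
    · linear_combination (norm := module) h • x - v • hp
    · linear_combination (norm := module) h • y + u • hp

lemma setOf_exists_eq_smul_sub {𝕜 E : Type*} [Field 𝕜] [AddCommGroup E] [Module 𝕜 E]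
    {c : 𝕜} (hc : c ≠ 0) (B : Set E) (w : E) :
    {z | ∃ u ∈ B, z = c • u - w} = (fun z => c⁻¹ • (z + w)) ⁻¹' B := by
  ext z
  constructor
  · rintro ⟨u, hu, rfl⟩
    rwa [mem_preimage, sub_add_cancel, inv_smul_smul₀ hc]
  · exact fun hz => ⟨_, hz, by simp [hc]⟩

lemma setOf_exists_eq_smul {𝕜 E : Type*} [Field 𝕜] [AddCommGroup E] [Module 𝕜 E]
    {c : 𝕜} (hc : c ≠ 0) (B : Set E) :
    {z | ∃ u ∈ B, z = c • u} = (fun z => c⁻¹ • z) ⁻¹' B := by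
  simpa using setOf_exists_eq_smul_sub hc B 0

def square (w : ℝ × ℝ) (c : ℝ) : Set (ℝ × ℝ) := Ico w.1 (w.1 + c) ×ˢ Ico w.2 (w.2 + c)

lemma measurableSet_square (w : ℝ × ℝ) (c : ℝ) : MeasurableSet (square w c) :=
  measurableSet_Ico.prod measurableSet_Ico

lemma volume_square_lt_top (w : ℝ × ℝ) (c : ℝ) : volume (square w c) < ⊤ :=
  (Metric.isBounded_Ico _ _).prod (Metric.isBounded_Ico _ _) |>.measure_lt_top

lemma preimage_add_smul_square (w : ℝ × ℝ) {c : ℝ} (hc : 0 < c) :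
    (fun x => w + c • x) ⁻¹' square w c = Ico 0 1 ×ˢ Ico 0 1 := by
  ext x
  simp [square, mul_lt_iff_lt_one_right hc, hc]

lemma Ico_add_zsmul_eq_Ico_add_mul (a c : ℝ) (n : ℤ) :
    Ico (a + n • c) (a + (n + 1) • c) = Ico (a + c * n) (a + c * n + c) := by
  rw [add_zsmul, one_zsmul, zsmul_eq_mul, mul_comm, add_assoc]

lemma pairwise_disjoint_square_add_smul (a : ℝ × ℝ) (c : ℝ) :
    Pairwise (Disjoint on fun t : ℤ × ℤ => square (a + c • ((t.1 : ℝ), (t.2 : ℝ))) c) := by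
  have h1 := pairwise_disjoint_Ico_add_zsmul a.1 c
  have h2 := pairwise_disjoint_Ico_add_zsmul a.2 c
  simp only [Ico_add_zsmul_eq_Ico_add_mul] at h1 h2
  rintro ⟨s₁, s₂⟩ ⟨t₁, t₂⟩ hst
  refine Set.disjoint_prod.mpr ?_
  by_cases h : s₁ = t₁
  · exact Or.inr (by simpa using h2 (fun h' => hst (by rw [h, h'])))
  · exact Or.inl (by simpa using h1 h)

lemma iUnion_square_add_smul (a : ℝ × ℝ) {c : ℝ} (hc : 0 < c) :
    ⋃ t : ℤ × ℤ, square (a + c • ((t.1 : ℝ), (t.2 : ℝ))) c = univ := by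
  have h1 := iUnion_Ico_add_zsmul hc a.1
  have h2 := iUnion_Ico_add_zsmul hc a.2
  simp only [Ico_add_zsmul_eq_Ico_add_mul] at h1 h2
  simp only [square, Prod.fst_add, Prod.snd_add, Prod.smul_mk, smul_eq_mul]
  rw [iUnion_prod (fun n : ℤ => Ico (a.1 + c * n) (a.1 + c * n + c))
    (fun n : ℤ => Ico (a.2 + c * n) (a.2 + c * n + c)), h1, h2, univ_prod_univ]

lemma tsum_measure_inter_of_partition {α ι : Type*} [MeasurableSpace α] [Countable ι]
    (μ : Measure α) {T : ι → Set α} (hd : Pairwise (Disjoint on T))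
    (hm : ∀ i, MeasurableSet (T i)) (hU : ⋃ i, T i = univ) (S : Set α) :
    ∑' i, μ (S ∩ T i) = μ S := by
  simp_rw [← Measure.restrict_apply' (hm _), ← Measure.sum_apply_of_countable,
    ← Measure.restrict_iUnion hd hm, hU, Measure.restrict_univ]

lemma tsum_volume_inter_square (S : Set (ℝ × ℝ)) (a : ℝ × ℝ) {c : ℝ} (hc : 0 < c) :
    ∑' t : ℤ × ℤ, volume (S ∩ square (a + c • ((t.1 : ℝ), (t.2 : ℝ))) c) = volume S :=
  tsum_measure_inter_of_partition volume (pairwise_disjoint_square_add_smul a c)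
    (fun _ => measurableSet_square _ _) (iUnion_square_add_smul a hc) S

lemma volume_preimage_add_smul (w : ℝ × ℝ) {c : ℝ} (hc : c ≠ 0) (A : Set (ℝ × ℝ)) :
    volume ((fun x => w + c • x) ⁻¹' A) = ENNReal.ofReal ((c ^ 2)⁻¹) * volume A := by
  rw [show (fun x => w + c • x) ⁻¹' A = (c • ·) ⁻¹' ((w + ·) ⁻¹' A) from rfl,
    Measure.addHaar_preimage_smul volume hc, measure_preimage_add, Module.finrank_prod,
    Module.finrank_self, one_add_one_eq_two, abs_of_nonneg (by positivity)]

lemma setIntegral_indicator_comp_add_smul {S : Set (ℝ × ℝ)} (hS : MeasurableSet S)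
    (w : ℝ × ℝ) {c : ℝ} (hc : 0 < c) :
    ∫ x in Ico 0 1 ×ˢ Ico 0 1, S.indicator 1 (w + c • x)
      = c⁻¹ ^ 2 * volume.real (S ∩ square w c) := by
  have hm : Measurable fun x : ℝ × ℝ => w + c • x := by fun_prop
  calc ∫ x in Ico 0 1 ×ˢ Ico 0 1, S.indicator 1 (w + c • x)
      = ∫ x in Ico 0 1 ×ˢ Ico 0 1, ((fun x => w + c • x) ⁻¹' S).indicator 1 x := rfl
    _ = volume.real ((fun x => w + c • x) ⁻¹' (S ∩ square w c)) := by
      rw [integral_indicator_one (hS.preimage hm), measureReal_restrict_apply (hS.preimage hm),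
        preimage_inter, preimage_add_smul_square w hc, inter_comm]
    _ = c⁻¹ ^ 2 * volume.real (S ∩ square w c) := by
      rw [measureReal_def, volume_preimage_add_smul w hc.ne', ENNReal.toReal_mul,
        ENNReal.toReal_ofReal (by positivity), inv_pow, measureReal_def]

lemma setIntegral_indicator_mul_indicator {r₁ r₂ : ℝ} (hr₁ : 0 < r₁) (hr₂ : 0 < r₂)
    {B₁ B₂ : Set (ℝ × ℝ)} (hB₁ : MeasurableSet B₁) (hB₂ : MeasurableSet B₂)
    {P₁ P₂ K : ℝ × ℝ} (hP : r₂ • P₁ - r₁ • P₂ = K) :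
    ∫ x in Ico 0 1 ×ˢ Ico 0 1, B₁.indicator 1 (P₁ + r₁ • x) * B₂.indicator 1 (P₂ + r₂ • x)
      = (r₁ * r₂)⁻¹ ^ 2 * volume.real
          ({z | ∃ u ∈ B₁, z = r₂ • u - K} ∩ {z | ∃ v ∈ B₂, z = r₁ • v} ∩
            square (r₁ • P₂) (r₁ * r₂)) := by
  rw [setOf_exists_eq_smul_sub hr₂.ne' B₁ K, setOf_exists_eq_smul hr₁.ne' B₂,
    ← setIntegral_indicator_comp_add_smul
      ((hB₁.preimage (by fun_prop)).inter (hB₂.preimage (by fun_prop))) _ (by positivity)]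
  congr 1 with x
  have h₁ : r₂⁻¹ • (r₁ • P₂ + (r₁ * r₂) • x + K) = P₁ + r₁ • x := by
    rw [← hP, inv_smul_eq_iff₀ hr₂.ne']
    module
  have h₂ : r₁⁻¹ • (r₁ • P₂ + (r₁ * r₂) • x) = P₂ + r₂ • x := by
    rw [inv_smul_eq_iff₀ hr₁.ne']
    module
  rw [inter_indicator_one, Pi.mul_apply, ← h₁, ← h₂]
  rfl

theorem Ck_formula_general (q₁ q₂ : ℕ) (hq₁ : 0 < q₁) (hq₂ : 0 < q₂) (hco : Nat.Coprime q₁ q₂)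
    (B₁ B₂ : Set (ℝ × ℝ))
    (hB₁m : MeasurableSet B₁) (hB₂m : MeasurableSet B₂)
    (k : ℤ × ℤ) :
    (∑' p : {p : (ℤ × ℤ) × (ℤ × ℤ) // (q₂ : ℤ) • p.1 - (q₁ : ℤ) • p.2 = k},
        ∫ x in Set.Ico (0:ℝ) 1 ×ˢ Set.Ico (0:ℝ) 1,
          (Set.indicator B₁ (fun _ => (1:ℝ))
              ((p.1.1.1 : ℝ) + q₁ * x.1, (p.1.1.2 : ℝ) + q₁ * x.2)) *
          (Set.indicator B₂ (fun _ => (1:ℝ))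
              ((p.1.2.1 : ℝ) + q₂ * x.1, (p.1.2.2 : ℝ) + q₂ * x.2)))
      = ((q₁ * q₂ : ℝ))⁻¹ ^ 2 *
          (volume ({z : ℝ × ℝ | ∃ u ∈ B₁, z = (q₂ : ℝ) • u - ((k.1 : ℝ), (k.2 : ℝ))} ∩
                   {z : ℝ × ℝ | ∃ v ∈ B₂, z = (q₁ : ℝ) • v})).toReal := by
  obtain ⟨u, v, huv⟩ := Nat.isCoprime_iff_coprime.mpr hco
  let embed : ℤ × ℤ → ℝ × ℝ := fun p => ((p.1 : ℝ), (p.2 : ℝ))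
  have hsol (p : {p : (ℤ × ℤ) × (ℤ × ℤ) // (q₂ : ℤ) • p.1 - (q₁ : ℤ) • p.2 = k}) :
      (q₂ : ℝ) • embed p.1.1 - (q₁ : ℝ) • embed p.1.2 = embed k := by
    obtain ⟨h₁, h₂⟩ := Prod.ext_iff.mp p.2
    ext
    · simpa [embed] using congrArg (Int.cast : ℤ → ℝ) h₁
    · simpa [embed] using congrArg (Int.cast : ℤ → ℝ) h₂
  have hcorner (t : ℤ × ℤ) : (q₁ : ℝ) • embed (bezoutSolutionEquiv huv k t).1.2
      = (q₁ : ℝ) • embed (-(u • k)) + (q₁ * q₂ : ℝ) • embed t := by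
    ext <;> simp [embed, bezoutSolutionEquiv] <;> ring
  calc _ = ∑' t : ℤ × ℤ, (q₁ * q₂ : ℝ)⁻¹ ^ 2 * volume.real
          ({z : ℝ × ℝ | ∃ u ∈ B₁, z = (q₂ : ℝ) • u - embed k} ∩ {z | ∃ v ∈ B₂, z = (q₁ : ℝ) • v} ∩
            square ((q₁ : ℝ) • embed (-(u • k)) + (q₁ * q₂ : ℝ) • embed t) (q₁ * q₂)) := by
        rw [← (bezoutSolutionEquiv huv k).tsum_eq]
        refine tsum_congr fun t => ?_
        rw [← hcorner]
        exact setIntegral_indicator_mul_indicator (by positivity) (by positivity) hB₁m hB₂m (hsol _)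
    _ = _ := by
        simp only [measureReal_def]
        rw [tsum_mul_left, ← ENNReal.tsum_toReal_eq, tsum_volume_inter_square _ _ (by positivity)]
        exact fun t => ((measure_mono inter_subset_right).trans_lt (volume_square_lt_top _ _)).ne

theorem Ck_formula (q₁ q₂ : ℕ) (hq₁ : 0 < q₁) (hq₂ : 0 < q₂) (hco : Nat.Coprime q₁ q₂)
    (B₁ B₂ : Set (ℝ × ℝ))
    (hB₁m : MeasurableSet B₁) (hB₂m : MeasurableSet B₂)
    (hB₁b : Bornology.IsBounded B₁) (hB₂b : Bornology.IsBounded B₂) (k : ℤ × ℤ) :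
    (∑' p : {p : (ℤ × ℤ) × (ℤ × ℤ) // (q₂ : ℤ) • p.1 - (q₁ : ℤ) • p.2 = k},
        ∫ x in Set.Ico (0:ℝ) 1 ×ˢ Set.Ico (0:ℝ) 1,
          (Set.indicator B₁ (fun _ => (1:ℝ))
              ((p.1.1.1 : ℝ) + q₁ * x.1, (p.1.1.2 : ℝ) + q₁ * x.2)) *
          (Set.indicator B₂ (fun _ => (1:ℝ))
              ((p.1.2.1 : ℝ) + q₂ * x.1, (p.1.2.2 : ℝ) + q₂ * x.2)))
      = ((q₁ * q₂ : ℝ))⁻¹ ^ 2 *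
          (volume ({z : ℝ × ℝ | ∃ u ∈ B₁, z = (q₂ : ℝ) • u - ((k.1 : ℝ), (k.2 : ℝ))} ∩
                   {z : ℝ × ℝ | ∃ v ∈ B₂, z = (q₁ : ℝ) • v})).toReal :=
  Ck_formula_general q₁ q₂ hq₁ hq₂ hco B₁ B₂ hB₁m hB₂m k
end

section
/- Let a_T be a positive function of T and let Υ_T = { (u,y) ∈ ℝ²×ℝ : |u₁u₂|·y ≤ a_T, max(|u₁|,|u₂|) ≤ 1/2, 1 ≤ y ≤ T }. Then for all sufficiently large T, ∫_{[0,1)²} |Λ_x ∩ Υ_T| dx = ∑_{q=1}^{⌊T⌋} Vol₂({ u ∈ ℝ² : |u₁u₂| ≤ a_T/q, max(|u₁|,|u₂|) ≤ 1/2 }), and this sum is ≪ (ln T)·a_T·(1 − ln(4a_T)) + (ln T)²·a_T when 4a_T ≤ 1. -/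
/-!
For fixed `q`, the maps `x ↦ p + q x` (`p ∈ ℤ²`) carry the unit square onto the boxes
`p + [0, q)²`, which cover the plane exactly `q²` times while each scales area by `q²`. Hence,
by Tonelli, integrating the number of lattice points over `x` unfolds into the sum over heights
`1 ≤ q ≤ T` of the areas of the slices of `Υ_T`, and the slice at height `q` is the hyperbolic
cross `|u₁ u₂| ≤ a / q`.

The cross of parameter `γ` lies in the rectangle `|u₁| ≤ 2γ` together with the two regions
`|u₂| ≤ γ / |u₁|`, `2γ ≤ |u₁| ≤ 1/2`, so its area is at most `4γ (1 - log 4γ)`. Summing over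
`q ≤ T` with `log (4a/q) = log 4a - log q` and `∑ 1/q ≤ 1 + log T` gives the bound.
-/

open MeasureTheory Set
open scoped ENNReal Pointwise

def hyperbolicCross (γ : ℝ) : Set (ℝ × ℝ) := {u | |u.1 * u.2| ≤ γ ∧ max |u.1| |u.2| ≤ 1 / 2}

/-- `Υ_T` with `a_T = a`. -/
def hyperbolicRegion (a T : ℝ) : Set ((ℝ × ℝ) × ℝ) :=
  {v | |v.1.1 * v.1.2| * v.2 ≤ a ∧ max |v.1.1| |v.1.2| ≤ 1 / 2 ∧ 1 ≤ v.2 ∧ v.2 ≤ T}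

/-- The bijection `ℤ² × ℤ → Λ_x`, so that `|Λ_x ∩ Υ_T|` is
`Nat.card (latticePoint x ⁻¹' hyperbolicRegion a T)`. -/
def latticePoint (x : ℝ × ℝ) (pq : (ℤ × ℤ) × ℤ) : (ℝ × ℝ) × ℝ :=
  (((pq.1.1 : ℝ) + pq.2 * x.1, (pq.1.2 : ℝ) + pq.2 * x.2), (pq.2 : ℝ))

lemma tsum_indicator_Ico_intCast_add (q : ℕ) (y : ℝ) :
    ∑' p : ℤ, (Ico (p : ℝ) (p + q)).indicator 1 y = (q : ℝ≥0∞) := by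
  have hmem : ∀ p : ℤ, y ∈ Ico (p : ℝ) (p + q) ↔ p ∈ Finset.Ioc (⌊y⌋ - q) ⌊y⌋ := by
    intro p
    rw [mem_Ico, Finset.mem_Ioc, sub_lt_iff_lt_add, Int.le_floor,
      show (p : ℝ) + q = ((p + q : ℤ) : ℝ) by push_cast; rfl, ← Int.floor_lt]
    exact and_comm
  rw [tsum_eq_sum (s := Finset.Ioc (⌊y⌋ - q) ⌊y⌋)
      fun p hp => indicator_of_notMem (mt (hmem p).1 hp) _,
    Finset.sum_congr rfl fun p hp => indicator_of_mem ((hmem p).2 hp) _]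
  simp

lemma tsum_measure_inter_Ico_prod_Ico (μ : Measure (ℝ × ℝ)) (q : ℕ) (S : Set (ℝ × ℝ)) :
    ∑' p : ℤ × ℤ, μ (S ∩ Ico (p.1 : ℝ) (p.1 + q) ×ˢ Ico (p.2 : ℝ) (p.2 + q))
      = q ^ 2 * μ S := by
  have hbox : ∀ p : ℤ × ℤ, MeasurableSet (Ico (p.1 : ℝ) (p.1 + q) ×ˢ Ico (p.2 : ℝ) (p.2 + q)) :=
    fun p => measurableSet_Ico.prod measurableSet_Ico
  have hcover : ∀ y : ℝ × ℝ,
      ∑' p : ℤ × ℤ, (Ico (p.1 : ℝ) (p.1 + q) ×ˢ Ico (p.2 : ℝ) (p.2 + q)).indicator 1 y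
        = (q : ℝ≥0∞) ^ 2 := fun ⟨y₁, y₂⟩ => by
    simp_rw [indicator_prod_one, ENNReal.tsum_prod',
      ENNReal.tsum_mul_left, ENNReal.tsum_mul_right, tsum_indicator_Ico_intCast_add, sq]
  calc ∑' p : ℤ × ℤ, μ (S ∩ Ico (p.1 : ℝ) (p.1 + q) ×ˢ Ico (p.2 : ℝ) (p.2 + q))
      = ∑' p : ℤ × ℤ,
          ∫⁻ y in S, (Ico (p.1 : ℝ) (p.1 + q) ×ˢ Ico (p.2 : ℝ) (p.2 + q)).indicator 1 y ∂μ := by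
        refine tsum_congr fun p => ?_
        rw [lintegral_indicator_one (hbox p), Measure.restrict_apply (hbox p), inter_comm]
    _ = q ^ 2 * μ S := by
        rw [← lintegral_tsum fun p => (measurable_one.indicator (hbox p)).aemeasurable]
        simp_rw [hcover]
        rw [lintegral_const, Measure.restrict_apply_univ]

lemma addHaar_preimage_const_add_smul {E : Type*} [NormedAddCommGroup E] [NormedSpace ℝ E]
    [MeasurableSpace E] [BorelSpace E] [FiniteDimensional ℝ E] (μ : Measure E)
    [μ.IsAddHaarMeasure] {r : ℝ} (hr : r ≠ 0) (v : E) (s : Set E) :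
    μ ((fun x => v + r • x) ⁻¹' s) = ENNReal.ofReal |(r ^ Module.finrank ℝ E)⁻¹| * μ s := by
  rw [show (fun x => v + r • x) = (fun x => v + x) ∘ (fun x => r • x) from rfl, preimage_comp,
    Measure.addHaar_preimage_smul μ hr, measure_preimage_add]

lemma preimage_const_add_mul_Ico_self (c : ℝ) {q : ℝ} (hq : 0 < q) :
    (fun t => c + q * t) ⁻¹' Ico c (c + q) = Ico 0 1 := by
  ext t
  simp only [mem_preimage, mem_Ico, le_add_iff_nonneg_right, add_lt_add_iff_left]
  rw [mul_nonneg_iff_of_pos_left hq, mul_lt_iff_lt_one_right hq]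

lemma tsum_volume_unitSquare_inter_preimage (q : ℕ) (hq : q ≠ 0) (S : Set (ℝ × ℝ)) :
    ∑' p : ℤ × ℤ, volume (Ico (0 : ℝ) 1 ×ˢ Ico (0 : ℝ) 1 ∩
        (fun x : ℝ × ℝ => ((p.1 : ℝ) + q * x.1, (p.2 : ℝ) + q * x.2)) ⁻¹' S)
      = volume S := by
  have hq' : (0 : ℝ) < q := by positivity
  have hsquare : ∀ p : ℤ × ℤ, Ico (0 : ℝ) 1 ×ˢ Ico (0 : ℝ) 1 =
      (fun x : ℝ × ℝ => ((p.1 : ℝ) + q * x.1, (p.2 : ℝ) + q * x.2)) ⁻¹'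
        (Ico (p.1 : ℝ) (p.1 + q) ×ˢ Ico (p.2 : ℝ) (p.2 + q)) := fun p => by
    change _ = Prod.map (fun t => (p.1 : ℝ) + q * t) (fun t => (p.2 : ℝ) + q * t) ⁻¹' _
    rw [preimage_prod_map_prod, preimage_const_add_mul_Ico_self _ hq',
      preimage_const_add_mul_Ico_self _ hq']
  have hmap : ∀ p : ℤ × ℤ, (fun x : ℝ × ℝ => ((p.1 : ℝ) + q * x.1, (p.2 : ℝ) + q * x.2)) =
      fun x => ((p.1 : ℝ), (p.2 : ℝ)) + (q : ℝ) • x := fun p => by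
    ext x <;> simp
  calc _ = ∑' p : ℤ × ℤ, ENNReal.ofReal |((q : ℝ) ^ 2)⁻¹| *
        volume (Ico (p.1 : ℝ) (p.1 + q) ×ˢ Ico (p.2 : ℝ) (p.2 + q) ∩ S) := by
        refine tsum_congr fun p => ?_
        rw [hsquare p, ← preimage_inter, hmap, addHaar_preimage_const_add_smul volume hq'.ne',
          Module.finrank_prod, Module.finrank_self]
    _ = volume S := by
        simp_rw [inter_comm _ S]
        rw [ENNReal.tsum_mul_left, tsum_measure_inter_Ico_prod_Ico, ← mul_assoc,
          abs_of_pos (by positivity), ENNReal.ofReal_inv_of_pos (by positivity),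
          ENNReal.ofReal_pow hq'.le, ENNReal.ofReal_natCast,
          ENNReal.inv_mul_cancel (by simpa using hq) (by simp), one_mul]

lemma encard_eq_tsum_indicator {X ι : Type*} (s : X → Set ι) (x : X) :
    ((s x).encard : ℝ≥0∞) = ∑' i, {y | i ∈ s y}.indicator 1 x := by
  rw [← ENNReal.tsum_set_one]
  exact (tsum_subtype (s x) 1).trans (tsum_congr fun i => by simp [indicator])

section Counting

variable {X ι : Type*} [MeasurableSpace X] [Countable ι] {s : X → Set ι}

lemma measurable_encard_family (hs : ∀ i, MeasurableSet {x | i ∈ s x}) :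
    Measurable fun x => ((s x).encard : ℝ≥0∞) := by
  simp_rw [encard_eq_tsum_indicator]
  exact Measurable.tsum fun i => measurable_one.indicator (hs i)

lemma lintegral_encard_eq_tsum_measure (μ : Measure X) (hs : ∀ i, MeasurableSet {x | i ∈ s x}) :
    ∫⁻ x, (s x).encard ∂μ = ∑' i, μ {x | i ∈ s x} := by
  simp_rw [encard_eq_tsum_indicator]
  rw [lintegral_tsum fun i => (measurable_one.indicator (hs i)).aemeasurable]
  simp_rw [lintegral_indicator_one (hs _)]

end Counting

lemma mk_mem_hyperbolicRegion_iff {a T : ℝ} {u : ℝ × ℝ} {y : ℝ} :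
    (u, y) ∈ hyperbolicRegion a T ↔ u ∈ hyperbolicCross (a / y) ∧ 1 ≤ y ∧ y ≤ T := by
  simp only [hyperbolicRegion, hyperbolicCross, mem_ofPred_eq]
  constructor
  · rintro ⟨h, hmax, hy⟩
    exact ⟨⟨(le_div_iff₀ (by linarith)).2 h, hmax⟩, hy⟩
  · rintro ⟨⟨h, hmax⟩, hy⟩
    exact ⟨(le_div_iff₀ (by linarith)).1 h, hmax, hy⟩

lemma isClosed_hyperbolicCross (γ : ℝ) : IsClosed (hyperbolicCross γ) :=
  (isClosed_le (f := fun u : ℝ × ℝ => |u.1 * u.2|) (by fun_prop) continuous_const).inter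
    (isClosed_le (f := fun u : ℝ × ℝ => max |u.1| |u.2|) (by fun_prop) continuous_const)

lemma hyperbolicCross_subset_closedBall (γ : ℝ) :
    hyperbolicCross γ ⊆ Metric.closedBall 0 (1 / 2) := fun u hu => by
  simpa [Prod.norm_def] using hu.2

lemma volume_hyperbolicCross_ne_top (γ : ℝ) : volume (hyperbolicCross γ) ≠ ∞ :=
  ((measure_mono (hyperbolicCross_subset_closedBall γ)).trans_lt measure_closedBall_lt_top).ne

lemma finite_latticePoint_preimage_hyperbolicRegion (a T : ℝ) (x : ℝ × ℝ) :
    (latticePoint x ⁻¹' hyperbolicRegion a T).Finite := by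
  set R := 1 / 2 + |T| * (|x.1| + |x.2|) + |T| with hR
  have hB : {z : ℤ | |(z : ℝ)| ≤ R}.Finite :=
    (isCompact_closedBall (0 : ℤ) R).finite_of_discrete.subset fun z hz => by
      simpa [Int.norm_eq_abs] using hz
  refine ((hB.prod hB).prod hB).subset ?_
  rintro ⟨⟨p₁, p₂⟩, q⟩ hpq
  obtain ⟨⟨-, hmax⟩, hq1, hqT⟩ := mk_mem_hyperbolicRegion_iff.1 hpq
  have hq : |(q : ℝ)| ≤ |T| := abs_le_abs_of_nonneg (by linarith) hqT
  have hcoord : ∀ (p : ℤ) (t : ℝ), |p + q * t| ≤ 1 / 2 → |t| ≤ |x.1| + |x.2| →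
      |(p : ℝ)| ≤ R := by
    intro p t hp ht
    calc |(p : ℝ)| = |(p + q * t) - q * t| := by ring_nf
      _ ≤ |p + q * t| + |(q : ℝ)| * |t| := by rw [← abs_mul]; exact abs_sub _ _
      _ ≤ R := by
        have := mul_le_mul hq ht (abs_nonneg _) (abs_nonneg _)
        linarith [abs_nonneg T, hR]
  have hx₁ : |x.1| ≤ |x.1| + |x.2| := le_add_of_nonneg_right (abs_nonneg _)
  have hx₂ : |x.2| ≤ |x.1| + |x.2| := le_add_of_nonneg_left (abs_nonneg _)
  refine ⟨⟨hcoord p₁ x.1 (le_of_max_le_left hmax) hx₁,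
    hcoord p₂ x.2 (le_of_max_le_right hmax) hx₂⟩, ?_⟩
  show |(q : ℝ)| ≤ R
  linarith [hR, mul_nonneg (abs_nonneg T) (add_nonneg (abs_nonneg x.1) (abs_nonneg x.2))]

lemma setOf_latticePoint_mem_hyperbolicRegion (a T : ℝ) (p : ℤ × ℤ) (q : ℤ) :
    {x | latticePoint x (p, q) ∈ hyperbolicRegion a T}
      = (fun x : ℝ × ℝ => ((p.1 : ℝ) + q * x.1, (p.2 : ℝ) + q * x.2)) ⁻¹' hyperbolicCross (a / q)
        ∩ {_x | 1 ≤ (q : ℝ) ∧ (q : ℝ) ≤ T} :=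
  ext fun _ => mk_mem_hyperbolicRegion_iff

lemma measurableSet_setOf_latticePoint_mem_hyperbolicRegion (a T : ℝ) (pq : (ℤ × ℤ) × ℤ) :
    MeasurableSet {x | latticePoint x pq ∈ hyperbolicRegion a T} := by
  rw [setOf_latticePoint_mem_hyperbolicRegion]
  exact ((isClosed_hyperbolicCross _).preimage (by fun_prop)).measurableSet.inter
    (MeasurableSet.const _)

lemma tsum_volume_unitSquare_inter_setOf_latticePoint_mem (a T : ℝ) (q : ℤ) :
    ∑' p : ℤ × ℤ, volume (Ico (0 : ℝ) 1 ×ˢ Ico (0 : ℝ) 1 ∩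
        {x | latticePoint x (p, q) ∈ hyperbolicRegion a T})
      = if 1 ≤ (q : ℝ) ∧ (q : ℝ) ≤ T then volume (hyperbolicCross (a / q)) else 0 := by
  simp_rw [setOf_latticePoint_mem_hyperbolicRegion]
  split_ifs with hq
  · have huniv : {_x : ℝ × ℝ | 1 ≤ (q : ℝ) ∧ (q : ℝ) ≤ T} = univ := eq_univ_of_forall fun _ => hq
    simp only [huniv, inter_univ]
    lift q to ℕ using (by exact_mod_cast (zero_le_one.trans hq.1))
    simp only [Int.cast_natCast] at hq ⊢
    exact tsum_volume_unitSquare_inter_preimage q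
      (by exact_mod_cast (zero_lt_one.trans_le hq.1).ne') _
  · simp [hq]

theorem integral_card_latticePoint_preimage_hyperbolicRegion (a T : ℝ) :
    ∫ x in Ico (0 : ℝ) 1 ×ˢ Ico (0 : ℝ) 1, (Nat.card (latticePoint x ⁻¹' hyperbolicRegion a T) : ℝ)
      = ∑ q ∈ Finset.Icc 1 ⌊T⌋₊, (volume (hyperbolicCross (a / q))).toReal := by
  set s := fun x => latticePoint x ⁻¹' hyperbolicRegion a T
  have hfin : ∀ x, (s x).Finite := finite_latticePoint_preimage_hyperbolicRegion a T
  have hmeas : ∀ pq, MeasurableSet {x | pq ∈ s x} :=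
    measurableSet_setOf_latticePoint_mem_hyperbolicRegion a T
  have hcard : ∀ x, (Nat.card (s x) : ℝ) = ((s x).encard : ℝ≥0∞).toReal := fun x => by
    rw [← (hfin x).cast_ncard_eq, Nat.card_coe_set_eq]
    rfl
  rw [integral_congr_ae (ae_of_all _ hcard),
    integral_toReal (measurable_encard_family hmeas).aemeasurable
      (ae_of_all _ fun x => by simpa using (hfin x).encard_lt_top),
    lintegral_encard_eq_tsum_measure _ hmeas, ENNReal.tsum_prod', ENNReal.tsum_comm]
  simp_rw [Measure.restrict_apply' (measurableSet_Ico.prod measurableSet_Ico),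
    inter_comm _ (Ico _ _ ×ˢ _),
    s, mem_preimage, tsum_volume_unitSquare_inter_setOf_latticePoint_mem]
  rw [tsum_eq_sum (s := (Finset.Icc 1 ⌊T⌋₊).map Nat.castEmbedding), Finset.sum_map,
    ENNReal.toReal_sum]
  · refine Finset.sum_congr rfl fun n hn => ?_
    obtain ⟨hn1, hnT⟩ := Finset.mem_Icc.1 hn
    have hn : 1 ≤ (n : ℝ) ∧ (n : ℝ) ≤ T :=
      ⟨by exact_mod_cast hn1, (Nat.le_floor_iff' (by omega)).1 hnT⟩
    simp [hn]
  · intro n _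
    split_ifs
    exacts [volume_hyperbolicCross_ne_top _, ENNReal.zero_ne_top]
  · intro q hq
    rw [if_neg]
    rintro ⟨hq1, hqT⟩
    lift q to ℕ using (by exact_mod_cast (zero_le_one.trans hq1))
    simp only [Int.cast_natCast, Nat.one_le_cast] at hq1 hqT
    exact hq (Finset.mem_map_of_mem _ (Finset.mem_Icc.2 ⟨hq1, Nat.le_floor hqT⟩))

lemma volume_setOf_mem_abs_le {s : Set ℝ} (hs : MeasurableSet s) {g : ℝ → ℝ} (hg : Measurable g) :
    volume {u : ℝ × ℝ | u.1 ∈ s ∧ |u.2| ≤ g u.1} = ∫⁻ t in s, ENNReal.ofReal (2 * g t) := by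
  have hmeas : MeasurableSet {u : ℝ × ℝ | u.1 ∈ s ∧ |u.2| ≤ g u.1} :=
    (measurable_fst hs).inter (measurableSet_le (by fun_prop) (hg.comp measurable_fst))
  rw [Measure.volume_eq_prod, Measure.prod_apply hmeas, ← lintegral_indicator hs]
  refine lintegral_congr fun t => ?_
  by_cases ht : t ∈ s
  · have hslice : Prod.mk t ⁻¹' {u : ℝ × ℝ | u.1 ∈ s ∧ |u.2| ≤ g u.1}
        = Metric.closedBall 0 (g t) := by
      ext y
      simp [ht]
    rw [hslice, Real.volume_closedBall, indicator_of_mem ht]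
  · simp [ht]

lemma volume_setOf_mem_Icc_abs_le_div {γ c d : ℝ} (hγ : 0 ≤ γ) (hc : 0 < c) (hcd : c ≤ d) :
    volume {u : ℝ × ℝ | u.1 ∈ Icc c d ∧ |u.2| ≤ γ / u.1}
      = ENNReal.ofReal (2 * γ * Real.log (d / c)) := by
  have hpos : ∀ t ∈ Icc c d, 0 < t := fun t ht => hc.trans_le ht.1
  rw [volume_setOf_mem_abs_le measurableSet_Icc (by fun_prop),
    ← ofReal_integral_eq_lintegral_ofReal]
  · rw [integral_Icc_eq_integral_Ioc, ← intervalIntegral.integral_of_le hcd]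
    simp_rw [mul_div_assoc', div_eq_mul_inv]
    rw [intervalIntegral.integral_const_mul, integral_inv_of_pos hc (hc.trans_le hcd),
      div_eq_mul_inv]
  · refine ContinuousOn.integrableOn_compact isCompact_Icc ?_
    exact continuousOn_const.mul
      (continuousOn_const.div continuousOn_id fun t ht => (hpos t ht).ne')
  · exact (ae_restrict_iff' measurableSet_Icc).2 (ae_of_all _ fun t ht => by
      have := hpos t ht
      positivity)

lemma volume_hyperbolicCross_le {γ : ℝ} (hγ : 0 < γ) (h4 : 4 * γ ≤ 1) :
    (volume (hyperbolicCross γ)).toReal ≤ 4 * γ * (1 - Real.log (4 * γ)) := by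
  set C := {u : ℝ × ℝ | u.1 ∈ Icc (2 * γ) (1 / 2) ∧ |u.2| ≤ γ / u.1}
  have hsub : hyperbolicCross γ ⊆ Icc (-(2 * γ)) (2 * γ) ×ˢ Icc (-(1 / 2)) (1 / 2) ∪ (C ∪ -C) := by
    rintro ⟨u₁, u₂⟩ ⟨hprod, hmax⟩
    obtain ⟨hu₁, hu₂⟩ := max_le_iff.1 hmax
    rw [abs_mul] at hprod
    rcases le_or_gt |u₁| (2 * γ) with hsmall | hlarge
    · exact Or.inl ⟨abs_le.1 hsmall, abs_le.1 hu₂⟩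
    have hu₂' : |u₂| ≤ γ / |u₁| := by
      rw [le_div_iff₀ (by linarith)]
      linarith
    rcases le_or_gt 0 u₁ with hnonneg | hneg
    · rw [abs_of_nonneg hnonneg] at hlarge hu₁ hu₂'
      exact Or.inr (Or.inl ⟨⟨hlarge.le, hu₁⟩, hu₂'⟩)
    · rw [abs_of_neg hneg] at hlarge hu₁ hu₂'
      exact Or.inr (Or.inr ⟨⟨hlarge.le, hu₁⟩, by simpa using hu₂'⟩)
  have hlog : Real.log ((1 / 2) / (2 * γ)) = - Real.log (4 * γ) := by
    rw [← Real.log_inv]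
    congr 1
    field_simp
    ring
  have hC : volume C = ENNReal.ofReal (2 * γ * - Real.log (4 * γ)) := by
    rw [volume_setOf_mem_Icc_abs_le_div hγ.le (by positivity) (by linarith), hlog]
  have hlog_nonpos : Real.log (4 * γ) ≤ 0 := Real.log_nonpos (by positivity) h4
  have hvol : volume (hyperbolicCross γ) ≤ ENNReal.ofReal (4 * γ * (1 - Real.log (4 * γ))) :=
    calc volume (hyperbolicCross γ)
        ≤ volume (Icc (-(2 * γ)) (2 * γ) ×ˢ Icc (-(1 / 2) : ℝ) (1 / 2))
            + (volume C + volume (-C)) :=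
          (measure_mono hsub).trans <| (measure_union_le _ _).trans <|
            add_le_add_right (measure_union_le _ _) _
      _ = ENNReal.ofReal (4 * γ * (1 - Real.log (4 * γ))) := by
          rw [Measure.measure_neg, hC, Measure.volume_eq_prod, Measure.prod_prod, Real.volume_Icc,
            Real.volume_Icc, ← ENNReal.ofReal_mul (by linarith), ← ENNReal.ofReal_add (by nlinarith)
            (by nlinarith), ← ENNReal.ofReal_add (by nlinarith) (by nlinarith)]
          ring_nf
  exact ENNReal.toReal_le_of_le_ofReal (by nlinarith) hvol

lemma sum_Icc_floor_inv_le_one_add_log {T : ℝ} (hT : 1 ≤ T) :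
    ∑ q ∈ Finset.Icc 1 ⌊T⌋₊, (q : ℝ)⁻¹ ≤ 1 + Real.log T := by
  have hharmonic := harmonic_le_one_add_log ⌊T⌋₊
  rw [harmonic_eq_sum_Icc] at hharmonic
  push_cast at hharmonic
  have hfloor : Real.log ⌊T⌋₊ ≤ Real.log T :=
    Real.log_le_log (by exact_mod_cast Nat.floor_pos.2 hT) (Nat.floor_le (by linarith))
  linarith

lemma sum_volume_hyperbolicCross_div_le {a T : ℝ} (ha : 0 < a) (h4 : 4 * a ≤ 1)
    (hT : Real.exp 1 ≤ T) :
    ∑ q ∈ Finset.Icc 1 ⌊T⌋₊, (volume (hyperbolicCross (a / q))).toReal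
      ≤ 8 * (Real.log T * (a * (1 - Real.log (4 * a))) + Real.log T ^ 2 * a) := by
  have hT1 : 1 ≤ T := (Real.one_lt_exp_iff.2 one_pos).le.trans hT
  have hlogT : 1 ≤ Real.log T := (Real.le_log_iff_exp_le (by linarith)).2 hT
  have hlog4a : Real.log (4 * a) ≤ 0 := Real.log_nonpos (by positivity) h4
  set K := 4 * a * (1 - Real.log (4 * a) + Real.log T) with hK
  have hK_nonneg : 0 ≤ K := mul_nonneg (by positivity) (by linarith)
  have hterm : ∀ q ∈ Finset.Icc 1 ⌊T⌋₊,
      (volume (hyperbolicCross (a / q))).toReal ≤ K * (q : ℝ)⁻¹ := by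
    intro q hq
    obtain ⟨hq1, hqT⟩ := Finset.mem_Icc.1 hq
    have hq1' : (1 : ℝ) ≤ q := by exact_mod_cast hq1
    have hqT' : (q : ℝ) ≤ T := (Nat.le_floor_iff' (by omega)).1 hqT
    have hlogq : Real.log q ≤ Real.log T := Real.log_le_log (by linarith) hqT'
    calc (volume (hyperbolicCross (a / q))).toReal
        ≤ 4 * (a / q) * (1 - Real.log (4 * (a / q))) :=
          volume_hyperbolicCross_le (by positivity)
            (by linarith [div_le_self ha.le hq1'])
      _ = 4 * a * (1 - Real.log (4 * a) + Real.log q) * (q : ℝ)⁻¹ := by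
          rw [mul_div_assoc', Real.log_div (by positivity) (by positivity)]
          ring
      _ ≤ K * (q : ℝ)⁻¹ := by rw [hK]; gcongr
  calc ∑ q ∈ Finset.Icc 1 ⌊T⌋₊, (volume (hyperbolicCross (a / q))).toReal
      ≤ ∑ q ∈ Finset.Icc 1 ⌊T⌋₊, K * (q : ℝ)⁻¹ := Finset.sum_le_sum hterm
    _ ≤ K * (1 + Real.log T) := by
        rw [← Finset.mul_sum]
        exact mul_le_mul_of_nonneg_left (sum_Icc_floor_inv_le_one_add_log hT1) hK_nonneg
    _ ≤ K * (2 * Real.log T) := mul_le_mul_of_nonneg_left (by linarith) hK_nonneg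
    _ = 8 * (Real.log T * (a * (1 - Real.log (4 * a))) + Real.log T ^ 2 * a) := by ring

theorem mean_count_strip (a : ℝ → ℝ) (ha : ∀ T, 0 < a T) :
    ∃ C : ℝ, 0 < C ∧ ∃ T₀ : ℝ, ∀ T ≥ T₀,
      ((∫ x in Set.Ico (0:ℝ) 1 ×ˢ Set.Ico (0:ℝ) 1,
          (Nat.card {pq : (ℤ × ℤ) × ℤ //
            |((pq.1.1 : ℝ) + pq.2 * x.1) * ((pq.1.2 : ℝ) + pq.2 * x.2)| * (pq.2 : ℝ) ≤ a T ∧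
            max |(pq.1.1 : ℝ) + pq.2 * x.1| |(pq.1.2 : ℝ) + pq.2 * x.2| ≤ 1 / 2 ∧
            1 ≤ (pq.2 : ℝ) ∧ (pq.2 : ℝ) ≤ T} : ℝ))
        = ∑ q ∈ Finset.Icc 1 ⌊T⌋₊,
            (volume {u : ℝ × ℝ | |u.1 * u.2| ≤ a T / q ∧ max |u.1| |u.2| ≤ 1 / 2}).toReal) ∧
      (4 * a T ≤ 1 →
        (∑ q ∈ Finset.Icc 1 ⌊T⌋₊,
            (volume {u : ℝ × ℝ | |u.1 * u.2| ≤ a T / q ∧ max |u.1| |u.2| ≤ 1 / 2}).toReal)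
          ≤ C * (Real.log T * (a T * (1 - Real.log (4 * a T)))
              + (Real.log T) ^ 2 * a T)) :=
  ⟨8, by norm_num, Real.exp 1, fun T hT =>
    ⟨integral_card_latticePoint_preimage_hyperbolicRegion (a T) T,
      fun h4 => sum_volume_hyperbolicCross_div_le (ha T) h4 hT⟩⟩
end
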